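/- Reduction to the reducible normal form: set U = (1/24)·(4 + (31+3√57)·(46+6√57)^{−1/3} + (100+12√57)·(46+6√57)^{−2/3}). For every real number K with −25/72 ≤ K < U there exist A ∈ GL(2,ℝ) and c ∈ (−2, 0] such that h_{1,K}(A·v) = v₁·v₂·(v₁² + c·v₁·v₂ + v₂²) for all v = (v₁, v₂) ∈ ℝ². -/

import Mathlib

/-!
For `s < 0` and `K = factorK s` the quartic `h_{1,K}` is the product of `x² − sxy + my²` and
`x² + sxy + qy²`. When `s³ − 2s + 2 > 0` the first factor has two distinct real root lines and
the second is positive definite. Sending the root lines to the coordinate axes turns `h_{1,K}` into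
`κ·uw·Q(u, w)` with `Q` positive definite, and a diagonal rescaling makes the outer coefficients
of `Q` equal to `1`. The middle coefficient `c` then satisfies `c² < 4` by positive definiteness,
and `c ≤ 0` exactly when `3s² ≥ 2`. Finally `factorK` maps `[x*, −√(2/3)]` onto `[−25/72, U]`,
where `x*` is the real root of `x³ − 2x + 2` (Cardano's formula for `x*` is where `U` comes from),
so the intermediate value theorem supplies `s` for every admissible `K`.
-/

noncomputable section
open Matrix

/-- `h_{L,K}(x,y) = x⁴ − x²y² + L·x·y³ + K·y⁴`. -/
def hLK (L K : ℝ) (v : Fin 2 → ℝ) : ℝ :=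
  v 0 ^ 4 - v 0 ^ 2 * v 1 ^ 2 + L * v 0 * v 1 ^ 3 + K * v 1 ^ 4

/-- Determinant of the Hessian matrix of `f : ℝ² → ℝ` at `p`. -/
def hessDet2 (f : (Fin 2 → ℝ) → ℝ) (p : Fin 2 → ℝ) : ℝ :=
  Matrix.det (Matrix.of fun i j : Fin 2 =>
    iteratedFDeriv ℝ 2 f p ![Pi.single i 1, Pi.single j 1])

/-- `H_{L,K}`: the connected component containing `(1,0)` of
`{p ∈ ℝ² : h_{L,K}(p) = 1 and p is a hyperbolic point of h_{L,K}}`. -/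
def Hcurve (L K : ℝ) : Set (Fin 2 → ℝ) :=
  connectedComponentIn {p | hLK L K p = 1 ∧ hessDet2 (hLK L K) p < 0} ![1, 0]

/-- The constant `U` of Theorem 3.2. -/
def Uconst : ℝ :=
  (1/24) * (4 + (31 + 3 * Real.sqrt 57) * (46 + 6 * Real.sqrt 57) ^ (-(1:ℝ)/3) +
    (100 + 12 * Real.sqrt 57) * (46 + 6 * Real.sqrt 57) ^ (-(2:ℝ)/3))

def quadForm (p B r : ℝ) (v : Fin 2 → ℝ) : ℝ :=
  p * v 0 ^ 2 + B * v 0 * v 1 + r * v 1 ^ 2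

def HasReducibleNormalForm (f : (Fin 2 → ℝ) → ℝ) : Prop :=
  ∃ (A : Matrix (Fin 2) (Fin 2) ℝ) (c : ℝ), IsUnit A ∧ -2 < c ∧ c ≤ 0 ∧
    ∀ v : Fin 2 → ℝ, f (A.mulVec v) = v 0 * v 1 * (v 0 ^ 2 + c * v 0 * v 1 + v 1 ^ 2)

theorem HasReducibleNormalForm.of_comp {f : (Fin 2 → ℝ) → ℝ} {M : Matrix (Fin 2) (Fin 2) ℝ}
    (hM : IsUnit M) (h : HasReducibleNormalForm fun v => f (M.mulVec v)) :
    HasReducibleNormalForm f := by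
  obtain ⟨A, c, hA, hc₂, hc₀, hfA⟩ := h
  exact ⟨M * A, c, hM.mul hA, hc₂, hc₀, fun v => by rw [← mulVec_mulVec]; exact hfA v⟩

theorem isUnit_of_fin_two_det_ne_zero {a b c d : ℝ} (h : a * d - b * c ≠ 0) :
    IsUnit !![a, b; c, d] := by
  rw [isUnit_iff_isUnit_det, det_fin_two_of]
  exact h.isUnit

theorem quadratic_pos_of_discrim_neg {p B r : ℝ} (hp : 0 < p) (hQ : discrim p B r < 0) (x : ℝ) :
    0 < p * x ^ 2 + B * x + r := by
  rw [discrim] at hQ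
  nlinarith [sq_nonneg (2 * p * x + B)]

theorem exists_ne_roots_of_discrim_pos {σ m : ℝ} (h : 0 < discrim 1 (-σ) m) :
    ∃ a b : ℝ, a ≠ b ∧ a + b = σ ∧ a * b = m := by
  set d := √(discrim 1 (-σ) m)
  have hd : 0 < d := Real.sqrt_pos.2 h
  have hd₂ : d ^ 2 = σ ^ 2 - 4 * m := by rw [Real.sq_sqrt h.le, discrim]; ring
  exact ⟨(σ + d) / 2, (σ - d) / 2, by linarith, by ring, by linear_combination (-1 / 4 : ℝ) * hd₂⟩

theorem exists_balancing_scalars {κ p r : ℝ} (hκ : 0 < κ) (hp : 0 < p) (hr : 0 < r) :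
    ∃ x y : ℝ, 0 < x ∧ 0 < y ∧ κ * p * x ^ 3 * y = 1 ∧ κ * r * x * y ^ 3 = 1 := by
  set t := √(p / r)
  have ht₀ : 0 < t := Real.sqrt_pos.2 (div_pos hp hr)
  have ht₂ : t ^ 2 = p / r := Real.sq_sqrt (div_pos hp hr).le
  set x := (κ * p * t)⁻¹ ^ ((4 : ℕ)⁻¹ : ℝ)
  have hx₄ : x ^ 4 = (κ * p * t)⁻¹ := Real.rpow_inv_natCast_pow (by positivity) (by norm_num)
  refine ⟨x, x * t, by positivity, by positivity, ?_, ?_⟩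
  · calc κ * p * x ^ 3 * (x * t) = (κ * p * t) * x ^ 4 := by ring
      _ = 1 := by rw [hx₄]; field_simp
  · calc κ * r * x * (x * t) ^ 3 = (κ * p * t) * x ^ 4 * (r * t ^ 2 / p) := by field_simp
      _ = 1 := by rw [hx₄, ht₂]; field_simp

theorem hasReducibleNormalForm_const_mul_quadForm {κ p B r : ℝ} (hκ : 0 < κ) (hp : 0 < p)
    (hr : 0 < r) (hB : B ≤ 0) (hQ : discrim p B r < 0) :
    HasReducibleNormalForm fun v => κ * (v 0 * v 1 * quadForm p B r v) := by
  obtain ⟨x, y, hx, hy, hxp, hyr⟩ := exists_balancing_scalars hκ hp hr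
  have hc₂ : (κ * x ^ 2 * y ^ 2 * B) ^ 2 < 4 := by
    rw [discrim] at hQ
    calc (κ * x ^ 2 * y ^ 2 * B) ^ 2 < (κ * x ^ 2 * y ^ 2) ^ 2 * (4 * p * r) := by
          rw [mul_pow]; gcongr; nlinarith
      _ = 4 * (κ * p * x ^ 3 * y) * (κ * r * x * y ^ 3) := by ring
      _ = 4 := by rw [hxp, hyr]; ring
  refine ⟨!![x, 0; 0, y], κ * x ^ 2 * y ^ 2 * B,
    isUnit_of_fin_two_det_ne_zero (by simpa using (mul_pos hx hy).ne'), by nlinarith,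
    mul_nonpos_of_nonneg_of_nonpos (by positivity) hB, fun v => ?_⟩
  simp only [quadForm, mulVec_fin_two, of_apply, cons_val_zero, cons_val_one, cons_val_fin_one]
  linear_combination (v 0 ^ 3 * v 1) * hxp + (v 0 * v 1 ^ 3) * hyr

theorem hasReducibleNormalForm_quadForm_mul_quadForm {σ m p B r : ℝ}
    (hσ : 0 < discrim 1 (-σ) m) (hp : 0 < p) (hQ : discrim p B r < 0)
    (hc : 0 ≤ 2 * p * m + B * σ + 2 * r) :
    HasReducibleNormalForm fun v => quadForm 1 (-σ) m v * quadForm p B r v := by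
  obtain ⟨a, b, hab, rfl, rfl⟩ := exists_ne_roots_of_discrim_pos hσ
  -- the columns of `M` span the root lines `x = b y` and `x = a y` of the indefinite factor
  refine .of_comp (M := !![b, -a; 1, -1])
    (isUnit_of_fin_two_det_ne_zero (by intro h; exact hab (by linarith))) ?_
  have hcomp : (fun v => quadForm 1 (-(a + b)) (a * b) (!![b, -a; 1, -1].mulVec v) *
      quadForm p B r (!![b, -a; 1, -1].mulVec v)) = fun v => (b - a) ^ 2 * (v 0 * v 1 *
        quadForm (p * b ^ 2 + B * b + r) (-(2 * p * (a * b) + B * (a + b) + 2 * r))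
          (p * a ^ 2 + B * a + r) v) := by
    ext v
    simp only [quadForm, mulVec_fin_two, of_apply, cons_val_zero, cons_val_one, cons_val_fin_one]
    ring
  have hdisc : discrim (p * b ^ 2 + B * b + r) (-(2 * p * (a * b) + B * (a + b) + 2 * r))
      (p * a ^ 2 + B * a + r) = (b - a) ^ 2 * discrim p B r := by
    simp only [discrim]
    ring
  rw [hcomp]
  refine hasReducibleNormalForm_const_mul_quadForm (by positivity)
    (quadratic_pos_of_discrim_neg hp hQ b) (quadratic_pos_of_discrim_neg hp hQ a) (by linarith) ?_
  rw [hdisc]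
  exact mul_neg_of_pos_of_neg (by positivity) hQ

def factorK (s : ℝ) : ℝ := ((s ^ 2 - 1) ^ 2 - 1 / s ^ 2) / 4

theorem hLK_one_factorK {s : ℝ} (hs : s ≠ 0) (v : Fin 2 → ℝ) :
    hLK 1 (factorK s) v =
      quadForm 1 (-s) ((s ^ 2 - 1 + 1 / s) / 2) v * quadForm 1 s ((s ^ 2 - 1 - 1 / s) / 2) v := by
  simp only [hLK, factorK, quadForm]
  field_simp
  ring

theorem hasReducibleNormalForm_hLK_one_factorK {s : ℝ} (hs : s < 0) (hs₂ : 2 ≤ 3 * s ^ 2)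
    (hs₃ : 0 < s ^ 3 - 2 * s + 2) : HasReducibleNormalForm (hLK 1 (factorK s)) := by
  have hs₀ := hs.ne
  rw [funext (hLK_one_factorK hs₀)]
  refine hasReducibleNormalForm_quadForm_mul_quadForm ?_ one_pos ?_ (by linarith)
  · have : discrim 1 (-s) ((s ^ 2 - 1 + 1 / s) / 2) = (s ^ 3 - 2 * s + 2) / -s := by
      rw [discrim]; field_simp; ring
    rw [this]
    exact div_pos hs₃ (neg_pos.2 hs)
  · have : discrim 1 s ((s ^ 2 - 1 - 1 / s) / 2) = (2 + 2 * s - s ^ 3) / s := by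
      rw [discrim]; field_simp; ring
    rw [this]
    exact div_neg_of_pos_of_neg (by nlinarith [sq_nonneg (3 * s + 2)]) hs

theorem factorK_of_cubic_eq_zero {x : ℝ} (hx : x ^ 3 - 2 * x + 2 = 0) :
    factorK x = (x ^ 2 - 3 * x) / 8 := by
  have hx₀ : x ≠ 0 := by rintro rfl; norm_num at hx
  rw [factorK]
  field_simp
  linear_combination (8 * x ^ 3 - 4 * x - 4) * hx

theorem lt_of_cubic_eq_zero {x : ℝ} (hx : x ^ 3 - 2 * x + 2 = 0) : x < -17 / 10 := by
  by_contra! h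
  nlinarith [mul_nonneg (show 0 ≤ x + 17 / 10 by linarith) (sq_nonneg (x - 17 / 20))]

theorem exists_cubic_eq_zero_Uconst_eq_factorK :
    ∃ x : ℝ, x ^ 3 - 2 * x + 2 = 0 ∧ Uconst = factorK x := by
  rw [Uconst]
  set e := √57
  have he : e ^ 2 = 57 := Real.sq_sqrt (by norm_num)
  have hw : 0 < 46 + 6 * e := by positivity
  set c := (46 + 6 * e) ^ ((3 : ℕ)⁻¹ : ℝ)
  have hc₀ : 0 < c := by positivity
  have hc : c ^ 3 = 46 + 6 * e := Real.rpow_inv_natCast_pow hw.le (by norm_num)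
  have h₁ : (46 + 6 * e) ^ (-(1 : ℝ) / 3) = c⁻¹ := by
    rw [neg_div, Real.rpow_neg hw.le]; norm_num [c]
  have h₂ : (46 + 6 * e) ^ (-(2 : ℝ) / 3) = (c ^ 2)⁻¹ := by
    rw [neg_div, Real.rpow_neg hw.le, ← Real.rpow_natCast, ← Real.rpow_mul hw.le]; norm_num [c]
  have hc₂ : c ^ 3 * (9 - e) ^ 2 = 192 := by rw [hc]; linear_combination (6 * e - 62) * he
  -- Cardano's formula, rewritten with `(9 + e) * (9 - e) = 24`
  set x := -c * (c + 2) * (9 - e) / 24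
  have hx : x ^ 3 - 2 * x + 2 = 0 := by
    linear_combination (-(9 - e) * (c + 2) ^ 3 / 13824) * hc₂ + (-(9 - e) / 72) * hc
      + (1 / 12) * he
  have hU : 3 * c ^ 2 * x ^ 2 - 9 * c ^ 2 * x = 4 * c ^ 2 + (31 + 3 * e) * c + 100 + 12 * e := by
    linear_combination (c * (c + 2) ^ 2 / 192) * hc₂ + ((3 / 8) * (c + 2) * (9 - e) + 1) * hc
      + (-(9 / 4) * (c + 2)) * he
  refine ⟨x, hx, ?_⟩
  clear_value x
  rw [factorK_of_cubic_eq_zero hx, h₁, h₂]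
  field_simp
  linear_combination (-8) * hU

theorem continuousOn_factorK {S : Set ℝ} (hS : ∀ s ∈ S, s ≠ 0) : ContinuousOn factorK S :=
  ((continuousOn_id.pow 2 |>.sub continuousOn_const |>.pow 2).sub
    (continuousOn_const.div (continuousOn_id.pow 2) fun s hs => pow_ne_zero 2 (hS s hs))).div_const 4

theorem exists_factorK_eq {K : ℝ} (hK₁ : -(25 / 72) ≤ K) (hK₂ : K < Uconst) :
    ∃ s, s < 0 ∧ 2 ≤ 3 * s ^ 2 ∧ 0 < s ^ 3 - 2 * s + 2 ∧ factorK s = K := by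
  obtain ⟨x, hx, hU⟩ := exists_cubic_eq_zero_Uconst_eq_factorK
  have hx' := lt_of_cubic_eq_zero hx
  set s₀ := -√(2 / 3)
  have hs₀ : s₀ ^ 2 = 2 / 3 := by rw [neg_sq, Real.sq_sqrt (by norm_num)]
  have hs₀' : s₀ < 0 := neg_neg_of_pos (by positivity)
  have hxs₀ : x < s₀ := by nlinarith
  have hK : K ∈ Set.Icc (factorK s₀) (factorK x) := by
    refine ⟨?_, hU ▸ hK₂.le⟩
    rw [factorK, hs₀]
    linarith
  obtain ⟨s, ⟨hxs, hss₀⟩, hsK⟩ := intermediate_value_Icc' hxs₀.le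
    (continuousOn_factorK fun s hs => by linarith [hs.2]) hK
  have hxs' : x < s := hxs.lt_of_ne (by rintro rfl; linarith)
  refine ⟨s, by linarith, by nlinarith, ?_, hsK⟩
  -- `s³ - 2s + 2 = (s - x)(s² + sx + x² - 2)`, and the quadratic factor is positive as `x² > 8/3`
  have hq : 0 < s ^ 2 + s * x + x ^ 2 - 2 := by nlinarith [sq_nonneg (2 * s + x)]
  nlinarith [mul_pos (sub_pos.2 hxs') hq]

/-- **Reduction to the reducible normal form.**
For `−25/72 ≤ K < U` there are `A ∈ GL(2,ℝ)` and `c ∈ (−2, 0]` with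
`h_{1,K}(A·v) = v₁v₂(v₁² + c·v₁v₂ + v₂²)` for all `v ∈ ℝ²`. -/
theorem reduction_to_reducible_normal_form (K : ℝ)
    (hK1 : -(25/72) ≤ K) (hK2 : K < Uconst) :
    ∃ (A : Matrix (Fin 2) (Fin 2) ℝ) (c : ℝ), IsUnit A ∧ -2 < c ∧ c ≤ 0 ∧
      ∀ v : Fin 2 → ℝ, hLK 1 K (A.mulVec v) =
        v 0 * v 1 * (v 0 ^ 2 + c * v 0 * v 1 + v 1 ^ 2) := by
  obtain ⟨s, hs, hs₂, hs₃, rfl⟩ := exists_factorK_eq hK1 hK2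
  exact hasReducibleNormalForm_hLK_one_factorK hs hs₂ hs₃
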